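/- arXiv:1511.06861 — 3 statements merged into one kernel-verified Lean document; each statement's English description precedes it below -/
import Mathlib

section
/- Over a Boolean ring A (a commutative unital F₂-algebra in which every element is idempotent), every k-linear differential operator Δ : P → Q of order ≤ m between A-modules is in fact of order ≤ 0, i.e., is an A-module homomorphism. In particular, every derivation ξ : A → Q vanishes. -/
open LinearMap

variable (k A : Type*) [CommRing k] [CommRing A] [Algebra k A]

section Defs

variable {P Q : Type*}
  [AddCommGroup P] [Module k P] [Module A P] [IsScalarTower k A P]
  [AddCommGroup Q] [Module k Q] [Module A Q] [IsScalarTower k A Q]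

/-- `δ_a(Δ) = Δ ∘ (a•·) − (a•·) ∘ Δ`. -/
noncomputable def deltaOp (a : A) (f : P →ₗ[k] Q) : P →ₗ[k] Q :=
  f ∘ₗ ((lsmul A P a).restrictScalars k) - ((lsmul A Q a).restrictScalars k) ∘ₗ f

/-- `IsDiffOp k A m Δ` : `Δ` is a differential operator of order `≤ m`, i.e.
`δ_{a_0} ∘ ⋯ ∘ δ_{a_m}(Δ) = 0` for all `a_0, …, a_m ∈ A`. -/
def IsDiffOp : ℕ → (P →ₗ[k] Q) → Prop
  | 0, f => ∀ a : A, deltaOp k A a f = 0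
  | (m + 1), f => ∀ a : A, IsDiffOp m (deltaOp k A a f)

end Defs


lemma char2_add_self {Q : Type*} [AddCommGroup Q] [Module (ZMod 2) Q] (x : Q) :
    x + x = 0 := by
  have : (2 : ZMod 2) • x = 0 := by
    rw [show (2 : ZMod 2) = 0 from rfl, zero_smul]
  rwa [two_smul] at this

lemma delta_idem {B : Type*} [CommRing B] [Algebra (ZMod 2) B]
    (hB : ∀ a : B, a * a = a)
    {P Q : Type*}
    [AddCommGroup P] [Module (ZMod 2) P] [Module B P] [IsScalarTower (ZMod 2) B P]
    [AddCommGroup Q] [Module (ZMod 2) Q] [Module B Q] [IsScalarTower (ZMod 2) B Q]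
    (a : B) (f : P →ₗ[ZMod 2] Q) :
    deltaOp (ZMod 2) B a (deltaOp (ZMod 2) B a f) = deltaOp (ZMod 2) B a f := by
  ext p
  simp only [deltaOp, LinearMap.sub_apply, LinearMap.comp_apply,
    LinearMap.coe_restrictScalars, lsmul_apply, map_sub, smul_sub, smul_smul, hB]
  have h2 : ∀ y : Q, y + y = 0 := char2_add_self
  have hne : ∀ y : Q, -y = y := fun y => by
    rw [neg_eq_iff_add_eq_zero]; exact h2 y
  abel_nf
  rw [show ((-2 : ℤ) • (a • f (a • p)) : Q) = -(a • f (a • p) + a • f (a • p)) by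
    rw [neg_zsmul, two_zsmul], h2, neg_zero, zero_add,
    show ((-1 : ℤ) • (a • f p) : Q) = -(a • f p) by rw [neg_zsmul, one_zsmul], hne]

lemma diffOp_zero {B : Type*} [CommRing B] [Algebra (ZMod 2) B]
    (hB : ∀ a : B, a * a = a)
    {P Q : Type*}
    [AddCommGroup P] [Module (ZMod 2) P] [Module B P] [IsScalarTower (ZMod 2) B P]
    [AddCommGroup Q] [Module (ZMod 2) Q] [Module B Q] [IsScalarTower (ZMod 2) B Q] :
    ∀ (m : ℕ) (Δ : P →ₗ[ZMod 2] Q), IsDiffOp (ZMod 2) B m Δ →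
      ∀ a : B, deltaOp (ZMod 2) B a Δ = 0 := by
  intro m
  induction m with
  | zero => intro Δ h a; exact h a
  | succ n ih =>
      intro Δ h a
      have := ih (deltaOp (ZMod 2) B a Δ) (h a) a
      rwa [delta_idem hB] at this

/-- over a Boolean ring (a commutative unital `𝔽₂`-algebra with
`a * a = a`), every differential operator of order `≤ m` is an `A`-module
homomorphism, and every derivation `A → Q` vanishes. -/
theorem boolean_diffOp_is_hom {B : Type*} [CommRing B] [Algebra (ZMod 2) B]
    (hB : ∀ a : B, a * a = a)
    {P Q : Type*}
    [AddCommGroup P] [Module (ZMod 2) P] [Module B P] [IsScalarTower (ZMod 2) B P]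
    [AddCommGroup Q] [Module (ZMod 2) Q] [Module B Q] [IsScalarTower (ZMod 2) B Q] :
    (∀ (m : ℕ) (Δ : P →ₗ[ZMod 2] Q), IsDiffOp (ZMod 2) B m Δ →
      ∀ (a : B) (p : P), Δ (a • p) = a • Δ p) ∧
    (∀ ξ : B →+ Q, (∀ a b : B, ξ (a * b) = a • ξ b + b • ξ a) → ξ = 0) := by
  constructor
  · intro m Δ h a p
    have h0 := diffOp_zero hB m Δ h a
    have := DFunLike.congr_fun h0 p
    simp only [deltaOp, LinearMap.sub_apply, LinearMap.comp_apply,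
      LinearMap.coe_restrictScalars, lsmul_apply, LinearMap.zero_apply,
      sub_eq_zero] at this
    exact this
  · intro ξ hξ
    ext a
    have := hξ a a
    rw [hB a] at this
    have h2 : a • ξ a + a • ξ a = 0 := char2_add_self _
    rw [AddMonoidHom.zero_apply, this, h2]
end

section
/- If the multiplicative set S is generated by finitely many elements s₁,…,s_m, then the image of |ι| : Spec_k(S⁻¹A) → Spec_k(A) is the Zariski open set U_{s₁⋯s_m} = {h | h(s₁⋯s_m) ≠ 0}, hence Spec_k(S⁻¹A) embeds as a Zariski open subset of Spec_k A. -/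
/-- if the multiplicative set `S` is generated by finitely many
elements `s₁, …, s_m`, then `|ι| : Spec_k (S⁻¹A) → Spec_k A` is injective with image
the basic Zariski open set `U_{s₁⋯s_m} = {h | h (s₁⋯s_m) ≠ 0}`; hence
`Spec_k (S⁻¹A)` embeds as a Zariski open subset of `Spec_k A`. -/
theorem spec_localization_finitelyGenerated_range
    {k A : Type*} [Field k] [CommRing A] [Algebra k A]
    {m : ℕ} (s : Fin m → A) (S : Submonoid A)
    (hS : S = Submonoid.closure (Set.range s)) (h0 : (0 : A) ∉ S) :
    Function.Injective
        (fun h : Localization S →ₐ[k] k =>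
          h.comp (IsScalarTower.toAlgHom k A (Localization S))) ∧
      Set.range
          (fun h : Localization S →ₐ[k] k =>
            h.comp (IsScalarTower.toAlgHom k A (Localization S))) =
        {h : A →ₐ[k] k | h (∏ i, s i) ≠ 0} := by
  constructor
  · intro f g hfg
    apply AlgHom.coe_ringHom_injective
    apply IsLocalization.ringHom_ext S
    ext a
    exact congrArg (fun φ => φ a) hfg
  · ext h
    simp only [Set.mem_range, Set.mem_setOf_eq]
    constructor
    · rintro ⟨g, rfl⟩
      have hprod : (∏ i, s i) ∈ S := by
        rw [hS]
        exact prod_mem (fun i _ => Submonoid.subset_closure ⟨i, rfl⟩)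
      have : IsUnit ((algebraMap A (Localization S)) (∏ i, s i)) :=
        IsLocalization.map_units _ ⟨_, hprod⟩
      intro hzero
      have := (this.map g).ne_zero
      exact this hzero
    · intro hne
      have hunit : ∀ y : S, IsUnit (h y) := by
        have key : ∀ y ∈ Submonoid.closure (Set.range s), IsUnit (h y) := by
          intro y hy
          have hs : ∀ i, h (s i) ≠ 0 := by
            intro i hzero
            apply hne
            rw [map_prod]
            exact Finset.prod_eq_zero (Finset.mem_univ i) hzero
          induction hy using Submonoid.closure_induction with
          | mem x hx =>
            obtain ⟨i, rfl⟩ := hx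
            exact (hs i).isUnit
          | one => simp
          | mul x y _ _ hx hy => rw [map_mul]; exact hx.mul hy
        rintro ⟨y, hy⟩
        exact key y (hS ▸ hy)
      refine ⟨IsLocalization.liftAlgHom (S := Localization S) hunit, ?_⟩
      ext a
      simp [IsLocalization.liftAlgHom_apply, IsLocalization.lift_eq]
end

section
/- Let Δ : P → Q be a differential operator of order ≤ k between A-modules. For each p ∈ P define Δ_p : A → Q by Δ_p(a) = Δ(ap). Then Δ_p is a differential operator of order ≤ k, the map h^Δ : P → Diff_k^>(A,Q), p ↦ Δ_p, is a homomorphism of A-modules (where Diff_k^> carries the right A-module structure (a,□) ↦ □ ∘ a), and D_k^> ∘ h^Δ = Δ, where D_k^>(□) = □(1). Moreover, Δ ↦ h^Δ is an A-module isomorphism Diff_k^>(P,Q) ≅ Hom_A(P, Diff_k^>(A,Q)). -/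
open LinearMap

variable (k A : Type*) [CommRing k] [CommRing A] [Algebra k A]

variable {P Q : Type*}
  [AddCommGroup P] [Module k P] [Module A P] [IsScalarTower k A P]
  [AddCommGroup Q] [Module k Q] [Module A Q] [IsScalarTower k A Q]

/-- `h^Δ(p) = Δ_p : a ↦ Δ(a • p)`. -/
noncomputable def hDelta (Δ : P →ₗ[k] Q) (p : P) : A →ₗ[k] Q :=
  Δ ∘ₗ ((LinearMap.toSpanSingleton A P p).restrictScalars k)

section Aux

@[simp] lemma deltaOp_apply (a : A) (f : P →ₗ[k] Q) (p : P) :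
    deltaOp k A a f p = f (a • p) - a • f p := rfl

@[simp] lemma hDelta_apply (Δ : P →ₗ[k] Q) (p : P) (b : A) :
    hDelta k A Δ p b = Δ (b • p) := rfl

lemma deltaOp_hDelta (Δ : P →ₗ[k] Q) (a : A) (p : P) :
    deltaOp k A a (hDelta k A Δ p) = hDelta k A (deltaOp k A a Δ) p := by
  ext b
  simp [mul_smul, smul_comm a b]

lemma hDelta_zero (p : P) : hDelta k A (0 : P →ₗ[k] Q) p = 0 := by
  ext b; simp

lemma isDiffOp_hDelta (m : ℕ) :
    ∀ (Δ : P →ₗ[k] Q), IsDiffOp k A m Δ → ∀ p : P, IsDiffOp k A m (hDelta k A Δ p) := by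
  induction m with
  | zero =>
    intro Δ h p a
    rw [deltaOp_hDelta, h a, hDelta_zero]
  | succ m ih =>
    intro Δ h p a
    rw [deltaOp_hDelta]
    exact ih (deltaOp k A a Δ) (h a) p

/-- `δ_a` as a `k`-linear map. -/
noncomputable def deltaOpL (a : A) : (P →ₗ[k] Q) →ₗ[k] (P →ₗ[k] Q) where
  toFun := deltaOp k A a
  map_add' f g := by ext p; simp [smul_add]; abel
  map_smul' c f := by ext p; simp only [deltaOp_apply, LinearMap.add_apply,
    LinearMap.smul_apply, RingHom.id_apply, smul_sub, smul_comm c a]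

@[simp] lemma deltaOpL_apply (a : A) (f : P →ₗ[k] Q) :
    deltaOpL k A a f = deltaOp k A a f := rfl

lemma ev1_deltaOp (F : P →ₗ[k] (A →ₗ[k] Q))
    (hc : ∀ (a : A) (p : P) (b : A), F (a • p) b = F p (b * a)) (a : A) :
    deltaOp k A a (LinearMap.applyₗ (1 : A) ∘ₗ F)
      = LinearMap.applyₗ (1 : A) ∘ₗ (deltaOpL k A a ∘ₗ F) := by
  ext p
  simp [hc a p 1, one_mul, mul_one]

lemma ev1_isDiffOp (m : ℕ) :
    ∀ F : P →ₗ[k] (A →ₗ[k] Q),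
      (∀ p, IsDiffOp k A m (F p)) →
      (∀ (a : A) (p : P) (b : A), F (a • p) b = F p (b * a)) →
      IsDiffOp k A m (LinearMap.applyₗ (1 : A) ∘ₗ F) := by
  induction m with
  | zero =>
    intro F hF hc a
    ext p
    have h0 := hF p a
    have : deltaOp k A a (F p) 1 = 0 := by rw [h0]; rfl
    simpa [hc a p 1, one_mul, mul_one] using this
  | succ m ih =>
    intro F hF hc a
    rw [ev1_deltaOp k A F hc a]
    refine ih (deltaOpL k A a ∘ₗ F) (fun p => hF p a) ?_
    intro c p b
    simp [hc, mul_assoc, mul_comm, mul_left_comm]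

end Aux

/-- for a differential operator `Δ : P → Q` of order `≤ m`, each
`Δ_p : a ↦ Δ(a p)` is a differential operator of order `≤ m`; the map
`h^Δ : p ↦ Δ_p` is a homomorphism of `A`-modules into `Diff_m^>(A,Q)` (with the
right `A`-module structure `(a,□) ↦ □ ∘ a`); `D_m^> ∘ h^Δ = Δ` (evaluation at `1`);
and `Δ ↦ h^Δ` is an isomorphism `Diff_m^>(P,Q) ≅ Hom_A(P, Diff_m^>(A,Q))`
(stated as injectivity and surjectivity). -/
theorem co_universality (m : ℕ) :
    (∀ (Δ : P →ₗ[k] Q), IsDiffOp k A m Δ → ∀ p : P, IsDiffOp k A m (hDelta k A Δ p)) ∧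
    (∀ (Δ : P →ₗ[k] Q) (p p' : P),
      hDelta k A Δ (p + p') = hDelta k A Δ p + hDelta k A Δ p') ∧
    (∀ (Δ : P →ₗ[k] Q) (a : A) (p : P) (b : A),
      hDelta k A Δ (a • p) b = hDelta k A Δ p (b * a)) ∧
    (∀ (Δ : P →ₗ[k] Q) (p : P), hDelta k A Δ p 1 = Δ p) ∧
    (∀ Δ Δ' : P →ₗ[k] Q, (∀ p, hDelta k A Δ p = hDelta k A Δ' p) → Δ = Δ') ∧
    (∀ F : P →ₗ[k] (A →ₗ[k] Q),
      (∀ p, IsDiffOp k A m (F p)) →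
      (∀ (a : A) (p : P) (b : A), F (a • p) b = F p (b * a)) →
      ∃ Δ : P →ₗ[k] Q, IsDiffOp k A m Δ ∧ ∀ p, F p = hDelta k A Δ p) := by
  refine ⟨isDiffOp_hDelta k A m, ?_, ?_, ?_, ?_, ?_⟩
  · intro Δ p p'; ext b; simp [smul_add]
  · intro Δ a p b; simp [mul_smul, smul_comm a b]
  · intro Δ p; simp
  · intro Δ Δ' h
    ext p
    have := congrArg (fun f => f (1 : A)) (h p)
    simpa using this
  · intro F hF hc
    refine ⟨LinearMap.applyₗ (1 : A) ∘ₗ F, ev1_isDiffOp k A m F hF hc, ?_⟩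
    intro p
    ext b
    simp [hc b p 1, one_mul]
end
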